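/- arXiv:2511.16844 — 2 statements merged into one kernel-verified Lean document; each statement's English description precedes it below -/
import Mathlib

section
/- Correctness of the A*-based search for TL relaxation (Lemma 1): let (x₀,q₀), (x₁,q₁), …, (x_n,q_n) be a sequence such that q₀ = (z₀, s₀) is the initial state of the relaxed specification automaton A, (x_k, x_{k+1}) ∈ δ_T for all 0 ≤ k < n, for each 0 ≤ k < n there is a symbol σ'_k ∈ Σ ∪ {ε} with (ℓ(x_{k+1}), σ'_k) ∈ Σ_E such that q_{k+1} is obtained from q_k by the transition of A on (ℓ(x_{k+1}), σ'_k), and q_n ∈ F_E × F_φ. Then the specification DFA A_φ accepts the word obtained from σ'_0 σ'_1 … σ'_{n-1} by deleting all ε symbols, and the WFSE E accepts the pair word (ℓ(x_1), σ'_0)(ℓ(x_2), σ'_1) … (ℓ(x_n), σ'_{n-1}); in particular the relaxed output word of the returned trajectory satisfies the specification and the pair of the trajectory's output word and the relaxed word is realized by the user relaxation preferences. -/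
/-- Run a deterministic automaton with transition function `δ` from state `s` on the word `w`. -/
def runDFA {S α : Type*} (δ : S → α → S) (s : S) (w : List α) : S :=
  w.foldl δ s

/-- One step of the relaxed specification automaton: on a symbol `(σ, some σ')` the state `(z, s)`
steps to `(δE z (σ, some σ'), δφ s σ')`; on `(σ, none)` it steps to `(δE z (σ, none), s)`. -/
def relStep {α Z S : Type*} (δE : Z → Option α × Option α → Z) (δφ : S → α → S)
    (q : Z × S) (a : Option α × Option α) : Z × S :=
  match a.2 with
  | some b => (δE q.1 a, δφ q.2 b)
  | none => (δE q.1 a, q.2)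

/-- Correctness of the A*-based search for TL relaxation (Lemma 1): if
`(x₀,q₀), …, (x_n,q_n)` is a sequence with `q₀` the initial state of the relaxed specification
automaton, consecutive `x`'s related by the transition relation `δT`, each `q_{k+1}` obtained
from `q_k` by a transition of `A` on a symbol `(ℓ(x_{k+1}), σ'_k)`, and `q_n` accepting, then the
specification DFA accepts the word `σ'_0 … σ'_{n-1}` with all `ε` (i.e. `none`) deleted, and the
WFSE accepts the pair word `(ℓ(x_1), σ'_0) … (ℓ(x_n), σ'_{n-1})`. -/
theorem astar_tl_relaxation_correct
    {X α Z S : Type*} [Fintype X] [Fintype α] [Fintype Z] [Fintype S]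
    (δT : X → X → Prop) (ℓ : X → α)
    (wT : X → X → ℝ) (hwT : ∀ u v, δT u v → 0 ≤ wT u v)
    (δE : Z → Option α × Option α → Z) (z₀ : Z) (FE : Set Z)
    (wE : Z → Option α × Option α → ℝ) (hwE : ∀ z a, 0 ≤ wE z a)
    (δφ : S → α → S) (s₀ : S) (Fφ : Set S)
    (n : ℕ) (x : ℕ → X) (q : ℕ → Z × S) (σ' : ℕ → Option α)
    (hq0 : q 0 = (z₀, s₀))
    (hT : ∀ k < n, δT (x k) (x (k+1)))
    (hstep : ∀ k < n,
      q (k+1) = relStep δE δφ (q k) ((some (ℓ (x (k+1))) : Option α), σ' k))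
    (hacc : (q n).1 ∈ FE ∧ (q n).2 ∈ Fφ) :
    runDFA δφ s₀ ((List.range n).filterMap σ') ∈ Fφ ∧
    runDFA δE z₀
      ((List.range n).map (fun k => ((some (ℓ (x (k+1))) : Option α), σ' k))) ∈ FE := by
  have key : ∀ m ≤ n, q m =
      (runDFA δE z₀ ((List.range m).map (fun k => ((some (ℓ (x (k+1))) : Option α), σ' k))),
       runDFA δφ s₀ ((List.range m).filterMap σ')) := by
    intro m hm
    induction m with
    | zero => simpa [runDFA] using hq0
    | succ m ih =>
      have hmn : m < n := Nat.lt_of_succ_le hm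
      have ihm := ih (Nat.le_of_lt hmn)
      rw [hstep m hmn, ihm]
      cases h : σ' m with
      | none =>
        simp [relStep, runDFA, List.range_succ, List.filterMap_append, h]
      | some b =>
        simp [relStep, runDFA, List.range_succ, List.filterMap_append, h]
  have := key n le_rfl
  rw [this] at hacc
  exact ⟨hacc.2, hacc.1⟩
end

section
/- Reduction of optimal TL path planning with relaxation to shortest path in the implicit product: let T = (X, x₀, δ_T, AP, ℓ, w_T) be a weighted transition system, A_φ a specification DFA over Σ = AP, E a WFSE over Σ_E all of whose transition symbols have non-ε first component, λ ≥ 0, and A the relaxed specification automaton. Define the weighted product search graph P on X × (Z × S) with an edge from (x, (z,s)) to (x', (z',s')) of cost w_T(x,x') + λ·w_E(z, z') whenever (x, x') ∈ δ_T and (z', s') is the transition of A from (z, s) on some symbol (ℓ(x'), σ') ∈ Σ_E. Then the minimum total cost over paths in P from (x₀, (z₀, s₀)) to a vertex whose automaton component lies in F_E × F_φ equals the minimum, over trajectories x = x₀ x₁ … x_n of T and words w = w₁ … w_n over Σ_E such that the k-th symbol w_k has first component ℓ(x_k), E accepts w, and A_φ accepts the output projection π₂(w), of w_T(x) + λ·(total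 E-weight of the accepting run of E on w), where w_T(x) = Σ_k w_T(x_{k-1}, x_k). -/
/-!
A path in the product graph and a pair (trajectory, edit word) are the same data: the `X`-component
of a path is a trajectory of `T`, the symbols chosen along its edges form the word `w`, and its
automaton component is the run of the relaxed automaton on `w`, whose `Z`-part is the run of `E`
and whose `S`-part is the run of `A_φ` on `π₂(w)`. Under this correspondence the cost of the path
splits as `w_T(x) + λ · (E-weight)`, so the two sets of costs coincide and so do their infima.
-/

lemma foldl_map_range_succ {β γ : Type*} (f : β → γ → β) (b : β) (w : ℕ → γ) (k : ℕ) :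
    ((List.range (k + 1)).map w).foldl f b = f (((List.range k).map w).foldl f b) (w k) := by
  simp [List.range_succ]

lemma eq_foldl_map_range_of_succ {β γ : Type*} (f : β → γ → β) {q : ℕ → β} {w : ℕ → γ} {n : ℕ}
    (hq : ∀ k < n, q (k + 1) = f (q k) (w k)) :
    ∀ k ≤ n, q k = ((List.range k).map w).foldl f (q 0) := by
  intro k hk
  induction k with
  | zero => rfl
  | succ k ih => rw [foldl_map_range_succ, ← ih (by omega), hq k hk]

section RelaxedAutomaton

variable {X α Z S : Type*} (δE : Z → Option α × Option α → Z) (δφ : S → α → S)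

lemma relStep_fst (q : Z × S) (a : Option α × Option α) :
    (relStep δE δφ q a).1 = δE q.1 a := by
  rcases a with ⟨_, _ | _⟩ <;> rfl

lemma foldl_relStep_snd (L : List (Option α × Option α)) (q : Z × S) :
    (L.foldl (relStep δE δφ) q).2 = runDFA δφ q.2 (L.filterMap Prod.snd) := by
  induction L generalizing q with
  | nil => rfl
  | cons a L ih => rcases a with ⟨_, _ | _⟩ <;> simp [relStep, runDFA, ih]

lemma snd_eq_runDFA_of_relStep {q : ℕ → Z × S} {w : ℕ → Option α × Option α} {n : ℕ}
    (hq : ∀ k < n, q (k + 1) = relStep δE δφ (q k) (w k)) :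
    (q n).2 = runDFA δφ (q 0).2 ((List.range n).filterMap fun k => (w k).2) := by
  rw [eq_foldl_map_range_of_succ _ hq n le_rfl, foldl_relStep_snd, List.filterMap_map]
  rfl

def relRun (q₀ : Z × S) (w : ℕ → Option α × Option α) (k : ℕ) : Z × S :=
  ((List.range k).map w).foldl (relStep δE δφ) q₀

lemma relRun_succ (q₀ : Z × S) (w : ℕ → Option α × Option α) (k : ℕ) :
    relRun δE δφ q₀ w (k + 1) = relStep δE δφ (relRun δE δφ q₀ w k) (w k) :=
  foldl_map_range_succ _ _ _ _

lemma fst_relRun_eq {z : ℕ → Z} {w : ℕ → Option α × Option α} {n : ℕ}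
    (hz : ∀ k < n, z (k + 1) = δE (z k) (w k)) (s₀ : S) :
    ∀ k ≤ n, (relRun δE δφ (z 0, s₀) w k).1 = z k := by
  intro k hk
  have hrun := eq_foldl_map_range_of_succ δE (q := fun k => (relRun δE δφ (z 0, s₀) w k).1)
    (n := n) (fun k _ => by rw [relRun_succ, relStep_fst]) k hk
  rw [hrun, eq_foldl_map_range_of_succ δE hz k hk]
  rfl

variable (δT : X → X → Prop) (ℓ : X → α) (enab : Z → Option α × Option α → Prop)

def productEdge (v v' : X × (Z × S)) : Prop :=
  δT v.1 v'.1 ∧ ∃ σ' : Option α, enab v.2.1 (some (ℓ v'.1), σ') ∧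
    v'.2 = relStep δE δφ v.2 (some (ℓ v'.1), σ')

lemma productEdge_iff {v v' : X × (Z × S)} :
    productEdge δE δφ δT ℓ enab v v' ↔ δT v.1 v'.1 ∧ ∃ a : Option α × Option α,
      a.1 = some (ℓ v'.1) ∧ enab v.2.1 a ∧ v'.2 = relStep δE δφ v.2 a := by
  refine and_congr_right fun _ => ⟨?_, ?_⟩
  · rintro ⟨σ', h⟩
    exact ⟨_, rfl, h⟩
  · rintro ⟨⟨_, σ'⟩, rfl, h⟩
    exact ⟨σ', h⟩

lemma exists_word_of_productPath {p : ℕ → X × (Z × S)} {n : ℕ}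
    (hp : ∀ k < n, productEdge δE δφ δT ℓ enab (p k) (p (k + 1))) :
    ∃ w : ℕ → Option α × Option α, ∀ k < n, δT (p k).1 (p (k + 1)).1 ∧
      (w k).1 = some (ℓ (p (k + 1)).1) ∧ enab (p k).2.1 (w k) ∧
      (p (k + 1)).2 = relStep δE δφ (p k).2 (w k) := by
  have hsym : ∀ k, ∃ a : Option α × Option α, k < n → δT (p k).1 (p (k + 1)).1 ∧
      a.1 = some (ℓ (p (k + 1)).1) ∧ enab (p k).2.1 a ∧
      (p (k + 1)).2 = relStep δE δφ (p k).2 a := by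
    intro k
    by_cases hk : k < n
    · obtain ⟨hT, a, ha⟩ := (productEdge_iff δE δφ δT ℓ enab).1 (hp k hk)
      exact ⟨a, fun _ => ⟨hT, ha⟩⟩
    · exact ⟨(none, none), fun h => absurd h hk⟩
  choose w hw using hsym
  exact ⟨w, hw⟩

end RelaxedAutomaton

theorem planning_reduction_to_shortest_path_general
    {X α Z S : Type*}
    (δT : X → X → Prop) (x₀ : X) (ℓ : X → α)
    (wT : X → X → ℝ)
    (δE : Z → Option α × Option α → Z) (z₀ : Z) (FE : Set Z)
    (enab : Z → Option α × Option α → Prop)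
    (wE : Z → Z → ℝ)
    (δφ : S → α → S) (s₀ : S) (Fφ : Set S)
    (lam : ℝ)
    (EP : X × (Z × S) → X × (Z × S) → Prop)
    (hEP : ∀ v v', EP v v' ↔ δT v.1 v'.1 ∧ ∃ σ' : Option α,
        enab v.2.1 ((some (ℓ v'.1) : Option α), σ') ∧
        v'.2 = relStep δE δφ v.2 ((some (ℓ v'.1) : Option α), σ')) :
    sInf {c : ℝ | ∃ (n : ℕ) (p : ℕ → X × (Z × S)),
        p 0 = (x₀, (z₀, s₀)) ∧
        (∀ k < n, EP (p k) (p (k+1))) ∧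
        ((p n).2.1 ∈ FE ∧ (p n).2.2 ∈ Fφ) ∧
        c = ∑ k ∈ Finset.range n,
          (wT (p k).1 (p (k+1)).1 + lam * wE (p k).2.1 (p (k+1)).2.1)} =
    sInf {c : ℝ | ∃ (n : ℕ) (x : ℕ → X) (w : ℕ → Option α × Option α) (z : ℕ → Z),
        x 0 = x₀ ∧
        (∀ k < n, δT (x k) (x (k+1))) ∧
        (∀ k < n, (w k).1 = (some (ℓ (x (k+1))) : Option α)) ∧
        z 0 = z₀ ∧
        (∀ k < n, enab (z k) (w k) ∧ z (k+1) = δE (z k) (w k)) ∧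
        z n ∈ FE ∧
        runDFA δφ s₀ ((List.range n).filterMap (fun k => (w k).2)) ∈ Fφ ∧
        c = (∑ k ∈ Finset.range n, wT (x k) (x (k+1))) +
            lam * ∑ k ∈ Finset.range n, wE (z k) (z (k+1))} := by
  obtain rfl : EP = productEdge δE δφ δT ℓ enab := by
    ext v v'
    exact hEP v v'
  congr 1
  ext c
  simp only [Set.mem_ofPred_eq, Finset.sum_add_distrib, Finset.mul_sum]
  constructor
  · rintro ⟨n, p, hp0, hp, ⟨hFE, hFφ⟩, rfl⟩
    obtain ⟨w, hw⟩ := exists_word_of_productPath δE δφ δT ℓ enab hp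
    have hrun := snd_eq_runDFA_of_relStep δE δφ (q := fun k => (p k).2) fun k hk => (hw k hk).2.2.2
    refine ⟨n, fun k => (p k).1, w, fun k => (p k).2.1, by simp [hp0], fun k hk => (hw k hk).1,
      fun k hk => (hw k hk).2.1, by simp [hp0], fun k hk => ⟨(hw k hk).2.2.1, ?_⟩, hFE,
      by rwa [hrun, hp0] at hFφ, rfl⟩
    exact (congrArg Prod.fst (hw k hk).2.2.2).trans (relStep_fst ..)
  · rintro ⟨n, x, w, z, rfl, hx, hwx, rfl, hz, hFE, hFφ, rfl⟩
    have hzrun := fst_relRun_eq δE δφ (fun k hk => (hz k hk).2) s₀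
    refine ⟨n, fun k => (x k, relRun δE δφ (z 0, s₀) w k), rfl, fun k hk => ?_,
      ⟨by rwa [hzrun n le_rfl], ?_⟩, ?_⟩
    · refine (productEdge_iff δE δφ δT ℓ enab).2 ⟨hx k hk, w k, hwx k hk, ?_, relRun_succ ..⟩
      rw [hzrun k hk.le]
      exact (hz k hk).1
    · rwa [snd_eq_runDFA_of_relStep δE δφ fun k _ => relRun_succ δE δφ _ w k]
    · refine congrArg _ (Finset.sum_congr rfl fun k hk => ?_)
      rw [Finset.mem_range] at hk
      rw [hzrun k hk.le, hzrun (k + 1) hk]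

/-- Reduction of optimal TL path planning with relaxation to shortest path in the implicit
product: the minimum total cost over paths in the weighted product search graph `P` from
`(x₀, (z₀, s₀))` to an accepting vertex equals the minimum combined cost
`w_T(x) + λ · (total E-weight)` over trajectories `x` of `T` and words `w` over the edit alphabet
whose `k`-th symbol has first component `ℓ(x_k)`, such that `E` accepts `w` and `A_φ` accepts
the output projection `π₂(w)`. Here `enab` gives the transitions (symbols enabled at each state)
of the WFSE; the hypothesis `hε` says all transition symbols of `E` have non-`ε` first
component. -/
theorem planning_reduction_to_shortest_path
    {X α Z S : Type*} [Fintype X] [Fintype α] [Fintype Z] [Fintype S]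
    (δT : X → X → Prop) (x₀ : X) (ℓ : X → α)
    (wT : X → X → ℝ) (hwT : ∀ u v, δT u v → 0 ≤ wT u v)
    (δE : Z → Option α × Option α → Z) (z₀ : Z) (FE : Set Z)
    (enab : Z → Option α × Option α → Prop)
    (hε : ∀ z a, enab z a → a.1 ≠ (none : Option α))
    (wE : Z → Z → ℝ) (hwE : ∀ z z', 0 ≤ wE z z')
    (δφ : S → α → S) (s₀ : S) (Fφ : Set S)
    (lam : ℝ) (hlam : 0 ≤ lam)
    (EP : X × (Z × S) → X × (Z × S) → Prop)
    (hEP : ∀ v v', EP v v' ↔ δT v.1 v'.1 ∧ ∃ σ' : Option α,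
        enab v.2.1 ((some (ℓ v'.1) : Option α), σ') ∧
        v'.2 = relStep δE δφ v.2 ((some (ℓ v'.1) : Option α), σ')) :
    sInf {c : ℝ | ∃ (n : ℕ) (p : ℕ → X × (Z × S)),
        p 0 = (x₀, (z₀, s₀)) ∧
        (∀ k < n, EP (p k) (p (k+1))) ∧
        ((p n).2.1 ∈ FE ∧ (p n).2.2 ∈ Fφ) ∧
        c = ∑ k ∈ Finset.range n,
          (wT (p k).1 (p (k+1)).1 + lam * wE (p k).2.1 (p (k+1)).2.1)} =
    sInf {c : ℝ | ∃ (n : ℕ) (x : ℕ → X) (w : ℕ → Option α × Option α) (z : ℕ → Z),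
        x 0 = x₀ ∧
        (∀ k < n, δT (x k) (x (k+1))) ∧
        (∀ k < n, (w k).1 = (some (ℓ (x (k+1))) : Option α)) ∧
        z 0 = z₀ ∧
        (∀ k < n, enab (z k) (w k) ∧ z (k+1) = δE (z k) (w k)) ∧
        z n ∈ FE ∧
        runDFA δφ s₀ ((List.range n).filterMap (fun k => (w k).2)) ∈ Fφ ∧
        c = (∑ k ∈ Finset.range n, wT (x k) (x (k+1))) +
            lam * ∑ k ∈ Finset.range n, wE (z k) (z (k+1))} :=
  planning_reduction_to_shortest_path_general δT x₀ ℓ wT δE z₀ FE enab wE δφ s₀ Fφ lam EP hEP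
end
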